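/- Let a_7, b_7, c_7, A_7, B_7, C_7 be real numbers with a_7 = -c_7 - A_7 - C_7. With F^+(x,y) = a_7 x + b_7 y^3, G^+(x,y) = c_7 y, define R^+(θ,r) = cos θ · F^+(r cos θ, r sin θ) + sin θ · G^+(r cos θ, r sin θ) and T^+(θ,r) = cos θ · G^+(r cos θ, r sin θ) - sin θ · F^+(r cos θ, r sin θ), and set P_1^+(θ,r) = -R^+(θ,r), P_2^+(θ,r) = -R^+(θ,r) T^+(θ,r)/r; define P_1^-, P_2^- analogously with A_7, B_7, C_7 in place of a_7, b_7, c_7. Let y_1^±(θ,r) = ∫_0^θ P_1^±(φ,r) dφ and y_2^±(θ,r) = ∫_0^θ [2 P_2^±(φ,r) + 2 (∂P_1^±/∂r)(φ,r) y_1^±(φ,r)] dφ. Then for every r > 0, f̃_2(r) := (y_2^+(π,r) - y_2^-(-π,r))/2 = (3π/32) r^3 (B_7 - b_7)(A_7 + C_7). -/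

import Mathlib

/-!
Reflecting `φ ↦ -φ` turns the system with coefficient `b` into the one with `-b`, so
`y₂(-π)` for `(A, B, C)` is `y₂(π)` for `(A, -B, C)`, and everything reduces to
`y₂(π, r) = π² r (a + c)² / 4 + 3π b r³ (a + c) / 16`.
For that value, `∂P₁/∂r = P₁/r - 2 b r² sin³φ cos φ`, so
`2 ∂P₁/∂r · y₁ = (y₁²/r)' - 4 b r² sin³φ cos φ · y₁`;
with the explicit `y₁` the whole integrand is the derivative of `y2Primitive` plus
`b r³ (a + c) sin⁴φ / 2`, and `∫₀^π sin⁴ = 3π/8`.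
Under `a + c = -(A + C)` the `π²` terms cancel.
-/

open Real intervalIntegral

/-- `R(θ,r) = cos θ · F(r cos θ, r sin θ) + sin θ · G(r cos θ, r sin θ)` for
`F(x,y) = a x + b y³`, `G(x,y) = c y`. -/
noncomputable def Rfun (a b c θ r : ℝ) : ℝ :=
  Real.cos θ * (a * (r * Real.cos θ) + b * (r * Real.sin θ) ^ 3)
    + Real.sin θ * (c * (r * Real.sin θ))

/-- `T(θ,r) = cos θ · G(r cos θ, r sin θ) - sin θ · F(r cos θ, r sin θ)` for
`F(x,y) = a x + b y³`, `G(x,y) = c y`. -/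
noncomputable def Tfun (a b c θ r : ℝ) : ℝ :=
  Real.cos θ * (c * (r * Real.sin θ))
    - Real.sin θ * (a * (r * Real.cos θ) + b * (r * Real.sin θ) ^ 3)

noncomputable def P1 (a b c θ r : ℝ) : ℝ := -(Rfun a b c θ r)

noncomputable def P2 (a b c θ r : ℝ) : ℝ := -(Rfun a b c θ r) * Tfun a b c θ r / r

noncomputable def y1 (a b c θ r : ℝ) : ℝ := ∫ φ in (0:ℝ)..θ, P1 a b c φ r

noncomputable def y2 (a b c θ r : ℝ) : ℝ :=
  ∫ φ in (0:ℝ)..θ,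
    (2 * P2 a b c φ r + 2 * deriv (fun s => P1 a b c φ s) r * y1 a b c φ r)

theorem integral_zero_to_neg (f : ℝ → ℝ) (θ : ℝ) :
    ∫ x in 0..-θ, f x = -∫ x in 0..θ, f (-x) := by
  rw [integral_comp_neg, neg_zero, integral_symm]

section

variable (a b c θ r : ℝ)

theorem P1_comp_neg : P1 a b c (-θ) r = P1 a (-b) c θ r := by
  simp only [P1, Rfun, sin_neg, cos_neg]; ring

theorem P2_comp_neg : P2 a b c (-θ) r = -P2 a (-b) c θ r := by
  simp only [P2, Rfun, Tfun, sin_neg, cos_neg]; ring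

theorem y1_comp_neg : y1 a b c (-θ) r = -y1 a (-b) c θ r := by
  simp only [y1, integral_zero_to_neg, P1_comp_neg]

theorem y2_comp_neg : y2 a b c (-θ) r = y2 a (-b) c θ r := by
  rw [y2, integral_zero_to_neg, y2, ← integral_neg]
  congr 1 with φ
  have hP1 : (fun s => P1 a b c (-φ) s) = fun s => P1 a (-b) c φ s :=
    funext fun s => P1_comp_neg a b c φ s
  rw [P2_comp_neg, y1_comp_neg, hP1]
  ring

end

noncomputable def y2Integrand (a b c φ r : ℝ) : ℝ :=
  2 * P2 a b c φ r + 2 * deriv (fun s => P1 a b c φ s) r * y1 a b c φ r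

noncomputable def y2Primitive (a b c r φ : ℝ) : ℝ :=
  y1 a b c φ r ^ 2 / r + b * r ^ 3 * (a + c) * φ * sin φ ^ 4 / 2
    + r * (a - c) * (c * sin φ ^ 4 - a * cos φ ^ 4) / 2 + 3 * b ^ 2 * r ^ 5 * sin φ ^ 8 / 8
    + b * r ^ 3 * (a - c) * sin φ ^ 5 * cos φ

section

variable (a b c r : ℝ)

theorem continuous_P1 : Continuous fun φ => P1 a b c φ r := by
  unfold P1 Rfun; fun_prop

theorem hasDerivAt_y1 (θ : ℝ) : HasDerivAt (fun θ => y1 a b c θ r) (P1 a b c θ r) θ :=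
  ((continuous_P1 a b c r).integral_hasStrictDerivAt 0 θ).hasDerivAt

theorem y1_eq (θ : ℝ) :
    y1 a b c θ r
      = -(r * ((a + c) * θ + (a - c) * sin θ * cos θ)) / 2 - b * r ^ 3 * sin θ ^ 4 / 4 := by
  have hderiv (φ : ℝ) : HasDerivAt
      (fun φ => -(r * ((a + c) * φ + (a - c) * sin φ * cos φ)) / 2 - b * r ^ 3 * sin φ ^ 4 / 4)
      (P1 a b c φ r) φ := by
    have h := ((((hasDerivAt_id φ).const_mul (a + c)).add
      (((hasDerivAt_sin φ).const_mul (a - c)).mul (hasDerivAt_cos φ))).const_mul r).neg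
      |>.div_const 2 |>.sub ((((hasDerivAt_sin φ).pow 4).const_mul (b * r ^ 3)).div_const 4)
    refine h.congr_deriv ?_
    simp only [P1, Rfun]
    linear_combination ((a + c) * r / 2) * sin_sq_add_cos_sq φ
  rw [y1, integral_eq_sub_of_hasDerivAt (fun φ _ => hderiv φ)
    ((continuous_P1 a b c r).intervalIntegrable 0 θ)]
  simp

theorem deriv_P1_radius (φ : ℝ) : deriv (fun s => P1 a b c φ s) r
    = -(a * cos φ ^ 2 + c * sin φ ^ 2) - 3 * b * r ^ 2 * sin φ ^ 3 * cos φ := by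
  have hP1 : (fun s => P1 a b c φ s)
      = fun s => -((a * cos φ ^ 2 + c * sin φ ^ 2) * s + b * sin φ ^ 3 * cos φ * s ^ 3) := by
    funext s; simp only [P1, Rfun]; ring
  rw [hP1]
  refine (((hasDerivAt_id' r).const_mul _).add
    ((hasDerivAt_pow 3 r).const_mul _)).neg.deriv.trans ?_
  push_cast; ring

theorem continuous_y2Integrand : Continuous fun φ => y2Integrand a b c φ r := by
  simp only [y2Integrand, deriv_P1_radius, y1_eq, P2, Rfun, Tfun]
  fun_prop

theorem hasDerivAt_y2Primitive (hr : r ≠ 0) (φ : ℝ) : HasDerivAt (y2Primitive a b c r)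
    (y2Integrand a b c φ r - b * r ^ 3 * (a + c) * sin φ ^ 4 / 2) φ := by
  have hsin := hasDerivAt_sin φ
  have h := (((((hasDerivAt_y1 a b c r φ).pow 2).div_const r).add
    ((((hasDerivAt_id' φ).const_mul (b * r ^ 3 * (a + c))).mul (hsin.pow 4)).div_const 2)).add
    ((((hsin.pow 4).const_mul c).sub (((hasDerivAt_cos φ).pow 4).const_mul a)).const_mul
      (r * (a - c)) |>.div_const 2)).add
    ((hsin.pow 8).const_mul (3 * b ^ 2 * r ^ 5) |>.div_const 8) |>.add
    (((hsin.pow 5).const_mul (b * r ^ 3 * (a - c))).mul (hasDerivAt_cos φ))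
  refine h.congr_deriv ?_
  rw [y2Integrand, deriv_P1_radius, y1_eq]
  simp only [P2, P1, Rfun, Tfun, Pi.pow_apply]
  field_simp
  linear_combination (-64 * b * r ^ 3 * (a + c) * sin φ ^ 4) * sin_sq_add_cos_sq φ

theorem integral_sin_pow_four_zero_pi : ∫ x in 0..π, sin x ^ 4 = 3 * π / 8 := by
  have h := integral_sin_pow_even (n := 2)
  norm_num [Finset.prod_range_succ] at h
  linarith

theorem y2_pi (hr : r ≠ 0) :
    y2 a b c π r = r * π ^ 2 * (a + c) ^ 2 / 4 + 3 * π * b * r ^ 3 * (a + c) / 16 := by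
  have hsplit : y2 a b c π r = ∫ φ in 0..π,
      ((y2Integrand a b c φ r - b * r ^ 3 * (a + c) * sin φ ^ 4 / 2)
        + b * r ^ 3 * (a + c) / 2 * sin φ ^ 4) := by
    simp only [y2, y2Integrand]; congr 1 with φ; ring
  have hcont : Continuous fun φ => y2Integrand a b c φ r - b * r ^ 3 * (a + c) * sin φ ^ 4 / 2 :=
    (continuous_y2Integrand a b c r).sub (by fun_prop)
  have hsin4 : Continuous fun φ => b * r ^ 3 * (a + c) / 2 * sin φ ^ 4 := by fun_prop
  rw [hsplit, integral_add (hcont.intervalIntegrable 0 π) (hsin4.intervalIntegrable 0 π),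
    integral_eq_sub_of_hasDerivAt (fun φ _ => hasDerivAt_y2Primitive a b c r hr φ)
      (hcont.intervalIntegrable 0 π), integral_const_mul, integral_sin_pow_four_zero_pi]
  simp only [y2Primitive, y1_eq, sin_pi, cos_pi, sin_zero, cos_zero]
  field_simp
  ring

end

/-- The second averaged function of system (9): when `a₇ = -c₇ - A₇ - C₇`
(so that the first averaged function vanishes identically),
`f̃₂(r) = (3π/32) r³ (B₇ - b₇)(A₇ + C₇)`. -/
theorem second_averaged_function_system9
    (a₇ b₇ c₇ A₇ B₇ C₇ : ℝ) (h : a₇ = -c₇ - A₇ - C₇) :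
    ∀ r : ℝ, 0 < r →
      (y2 a₇ b₇ c₇ π r - y2 A₇ B₇ C₇ (-π) r) / 2
        = (3 * π / 32) * r ^ 3 * (B₇ - b₇) * (A₇ + C₇) := by
  intro r hr
  rw [y2_comp_neg, y2_pi _ _ _ _ hr.ne', y2_pi _ _ _ _ hr.ne', h]
  ring
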